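/- Let p and k be positive integers. If k is odd, then Σ_{m+n=k, m,n ≥ 0} (−1)^m (z_p^m ⋆_t z_p^n) = 0. If k is even, then Σ_{m+n=k, m,n ≥ 0} (−1)^m (z_p^m ⋆_t z_p^n) = (−1)^{k/2} Σ_{l₁+l₂=k/2, l₁,l₂ ≥ 0} (t²−t)^{l₁} (1−2t)^{l₂} F^k_{l₂}, where F^k_{d} denotes the sum of the words z_{a₁}⋯z_{a_d} over all sequences (a₁,…,a_d) of positive even multiples of p with a₁+⋯+a_d = kp (an empty range of such sequences giving 0). -/

import Mathlib

/- ℍ_t = ℚ[t]⟨x,y⟩, z_k = x^{k-1}y, and the t-stuffle product ⋆_t on the word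
basis of ℍ¹_t (a ℚ[t]-bilinear map is determined by its values on words). -/

noncomputable section

open Polynomial Finset

abbrev R : Type := Polynomial ℚ
abbrev A : Type := FreeAlgebra R Bool

def Xg : A := FreeAlgebra.ι R false
def Yg : A := FreeAlgebra.ι R true
def tp : R := Polynomial.X

/-- `z k = x^(k-1) y`. -/
def z (k : ℕ) : A := Xg ^ (k - 1) * Yg

/-- The word `z_{k₁} ⋯ z_{kₙ}`. -/
def zw (w : List ℕ) : A := (w.map z).prod

/-- The t-stuffle product, given on the word basis of ℍ¹_t. -/
def tst : List ℕ → List ℕ → A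
  | [], w => zw w
  | k :: w₁, [] => zw (k :: w₁)
  | k :: w₁, l :: w₂ =>
      z k * tst w₁ (l :: w₂) + z l * tst (k :: w₁) w₂
        + (1 - 2 * tp) • (z (k + l) * tst w₁ w₂)
        + (if w₁ = [] ∧ w₂ = [] then (0 : R) else tp ^ 2 - tp) • (Xg ^ (k + l) * tst w₁ w₂)
  termination_by w₁ w₂ => w₁.length + w₂.length

lemma zw_nil : zw [] = 1 := rfl
lemma zw_cons (a : ℕ) (w : List ℕ) : zw (a :: w) = z a * zw w := by simp [zw]

lemma tst_nil_left (w : List ℕ) : tst [] w = zw w := by rw [tst]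
lemma tst_nil_right (w : List ℕ) : tst w [] = zw w := by
  cases w with
  | nil => rw [tst]
  | cons a w => rw [tst]

lemma tst_cons_cons (k l : ℕ) (w₁ w₂ : List ℕ) :
    tst (k :: w₁) (l :: w₂) = z k * tst w₁ (l :: w₂) + z l * tst (k :: w₁) w₂
        + (1 - 2 * tp) • (z (k + l) * tst w₁ w₂)
        + (if w₁ = [] ∧ w₂ = [] then (0 : R) else tp ^ 2 - tp) • (Xg ^ (k + l) * tst w₁ w₂) := by
  rw [tst]

lemma Xg_pow_mul_z (b a : ℕ) (ha : 1 ≤ a) : Xg ^ b * z a = z (b + a) := by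
  unfold z
  rw [← mul_assoc, ← pow_add]
  congr 2
  omega

def Aa (p m n : ℕ) : A := tst (List.replicate m p) (List.replicate n p)
def Sa (p k : ℕ) : A := ∑ m ∈ Finset.range (k+1), ((-1:R)^m) • Aa p m (k - m)
def C2 (p : ℕ) : A := (1 - 2*tp) • z (2*p) + (tp^2 - tp) • Xg ^ (2*p)

lemma Aa_zero_left (p n : ℕ) : Aa p 0 n = zw (List.replicate n p) := tst_nil_left _
lemma Aa_zero_right (p m : ℕ) : Aa p m 0 = zw (List.replicate m p) := tst_nil_right _

lemma Aa_succ_succ (p m n : ℕ) :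
    Aa p (m+1) (n+1) = z p * Aa p m (n+1) + z p * Aa p (m+1) n
      + (1 - 2*tp) • (z (2*p) * Aa p m n)
      + (if m = 0 ∧ n = 0 then (0:R) else tp^2 - tp) • (Xg ^ (2*p) * Aa p m n) := by
  have h2 : p + p = 2 * p := by ring
  unfold Aa
  rw [List.replicate_succ (n := m), List.replicate_succ (n := n), tst_cons_cons, h2]
  simp [List.replicate_eq_nil_iff]

lemma Skey (p K : ℕ) : Sa p (K+3) = -(C2 p * Sa p (K+1)) := by
  have key : ∀ j ∈ Finset.range (K+2),
      ((-1:R)^(j+1)) • Aa p (j+1) (K+3-(j+1))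
        = ((-1:R)^(j+1)) • (z p * Aa p (j+1) (K+2-(j+1)))
          - ((-1:R)^j) • (z p * Aa p j (K+2-j))
          - C2 p * (((-1:R)^j) • Aa p j (K+1-j)) := by
    intro j hj
    rw [Finset.mem_range] at hj
    have h1 : K+3-(j+1) = (K+1-j)+1 := by omega
    have h2 : K+2-j = (K+1-j)+1 := by omega
    have h3 : K+2-(j+1) = K+1-j := by omega
    rw [h1, Aa_succ_succ, if_neg (by omega), h2, h3, C2]
    simp only [pow_succ, add_mul, smul_mul_assoc, mul_smul_comm]
    module
  have expand : Sa p (K+3)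
      = ((∑ j ∈ Finset.range (K+2), ((-1:R)^(j+1)) • Aa p (j+1) (K+3-(j+1)))
        + ((-1:R)^0) • Aa p 0 (K+3-0)) + ((-1:R)^(K+3)) • Aa p (K+3) (K+3-(K+3)) := by
    rw [Sa, Finset.sum_range_succ, Finset.sum_range_succ']
  rw [expand, Finset.sum_congr rfl key]
  rw [Finset.sum_sub_distrib, Finset.sum_sub_distrib]
  have hG1 : ∑ j ∈ Finset.range (K+2), ((-1:R)^(j+1)) • (z p * Aa p (j+1) (K+2-(j+1)))
      = (∑ j ∈ Finset.range (K+2), ((-1:R)^j) • (z p * Aa p j (K+2-j)))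
        + ((-1:R)^(K+2)) • (z p * Aa p (K+2) (K+2-(K+2)))
        - ((-1:R)^0) • (z p * Aa p 0 (K+2-0)) := by
    rw [eq_sub_iff_add_eq, ← Finset.sum_range_succ' (fun j => ((-1:R)^j) • (z p * Aa p j (K+2-j))) (K+2),
      Finset.sum_range_succ]
  rw [hG1]
  have hC : ∑ j ∈ Finset.range (K+2), C2 p * (((-1:R)^j) • Aa p j (K+1-j))
      = C2 p * Sa p (K+1) := by
    rw [Sa, Finset.mul_sum]
  rw [hC]
  have e1 : Aa p (K+2) (K+2-(K+2)) = zw (List.replicate (K+2) p) := by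
    rw [Nat.sub_self, Aa_zero_right]
  have e2 : Aa p (K+3) (K+3-(K+3)) = zw (List.replicate (K+3) p) := by
    rw [Nat.sub_self, Aa_zero_right]
  have e3 : Aa p 0 (K+3-0) = zw (List.replicate (K+3) p) := by
    rw [Nat.sub_zero, Aa_zero_left]
  have e4 : Aa p 0 (K+2-0) = zw (List.replicate (K+2) p) := by
    rw [Nat.sub_zero, Aa_zero_left]
  have e5 : z p * zw (List.replicate (K+2) p) = zw (List.replicate (K+3) p) := by
    rw [List.replicate_succ (n := K+2), zw_cons]
  rw [e1, e2, e3, e4, e5]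
  have e6 : ((-1:R)^(K+3)) = -((-1:R)^(K+2)) := by rw [pow_succ]; ring
  rw [e6]
  have e7 : (-(-1:R)^(K+2)) • zw (List.replicate (K+3) p) = -((-1:R)^(K+2) • zw (List.replicate (K+3) p)) := neg_smul (R := R) (M := A) _ _
  rw [e7]; abel

lemma Sa_one (p : ℕ) : Sa p 1 = 0 := by
  rw [Sa]
  rw [Finset.sum_range_succ, Finset.sum_range_one]
  simp only [Nat.sub_zero, Nat.sub_self, Aa_zero_left, Aa_zero_right, pow_zero, pow_one]
  module

lemma Sa_two (p : ℕ) : Sa p 2 = -((1 - 2*tp) • z (2*p)) := by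
  rw [Sa]
  rw [Finset.sum_range_succ, Finset.sum_range_succ, Finset.sum_range_one]
  have h11 : Aa p 1 1 = z p * Aa p 0 1 + z p * Aa p 1 0
      + (1 - 2*tp) • (z (2*p) * Aa p 0 0)
      + (if (0:ℕ) = 0 ∧ (0:ℕ) = 0 then (0:R) else tp^2 - tp) • (Xg ^ (2*p) * Aa p 0 0) :=
    Aa_succ_succ p 0 0
  rw [if_pos ⟨rfl, rfl⟩, zero_smul, add_zero] at h11
  have e0 : Aa p 0 0 = 1 := by rw [Aa_zero_left]; rfl
  have e1 : Aa p 0 1 = zw [p] := by rw [Aa_zero_left]; rfl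
  have e2 : Aa p 1 0 = zw [p] := by rw [Aa_zero_right]; rfl
  have e3 : Aa p 0 2 = z p * zw [p] := by
    rw [Aa_zero_left]; rw [show List.replicate 2 p = p :: [p] from rfl, zw_cons]
  have e4 : Aa p 2 0 = z p * zw [p] := by
    rw [Aa_zero_right]; rw [show List.replicate 2 p = p :: [p] from rfl, zw_cons]
  rw [h11, e0, e1, e2, e3, e4]
  simp only [Nat.sub_zero, Nat.sub_self, pow_zero, pow_one, pow_two, mul_one]
  module

lemma Sa_odd (p h : ℕ) : Sa p (2*h+1) = 0 := by
  induction h with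
  | zero => exact Sa_one p
  | succ n ih =>
      have : 2*(n+1)+1 = (2*n)+3 := by ring
      rw [this, Skey, show (2*n)+1 = 2*n+1 from rfl, ih, mul_zero, neg_zero]

lemma Sa_even (p h : ℕ) : Sa p (2*(h+1)) = ((-1:R)^(h+1)) • (C2 p ^ h * ((1 - 2*tp) • z (2*p))) := by
  induction h with
  | zero =>
      rw [show 2*(0+1) = 2 from rfl, Sa_two]
      simp only [pow_one, pow_zero, one_mul]
      module
  | succ n ih =>
      have : 2*(n+1+1) = (2*(n+1)-1)+3 := by omega
      rw [this, Skey, show 2*(n+1)-1+1 = 2*(n+1) from by omega, ih]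
      rw [mul_smul_comm, ← mul_assoc, ← pow_succ']
      rw [pow_succ (-1:R) (n+1)]
      module

def Dw (p : ℕ) : ℕ → ℕ → A
  | 0, 0 => 1
  | 0, _+1 => 0
  | _+1, 0 => 0
  | h+1, d+1 => z (2*p) * Dw p h d + Xg ^ (2*p) * Dw p h (d+1)

lemma Dw_gt (p : ℕ) : ∀ h d, h < d → Dw p h d = 0 := by
  intro h
  induction h with
  | zero => intro d hd; match d, hd with | d+1, _ => rw [Dw]
  | succ n ih =>
      intro d hd
      match d, hd with
      | d+1, hd =>
          rw [Dw, ih d (by omega), ih (d+1) (by omega), mul_zero, mul_zero, add_zero]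

lemma Dw_succ_zero (p h : ℕ) : Dw p (h+1) 0 = 0 := by rw [Dw]

lemma GC (p : ℕ) : ∀ h, C2 p ^ h * ((1 - 2*tp) • z (2*p))
    = ∑ i ∈ Finset.range (h+2),
        ((tp^2 - tp)^i * (1 - 2*tp)^(h+1-i)) • Dw p (h+1) (h+1-i) := by
  intro h
  induction h with
  | zero =>
      rw [pow_zero, one_mul]
      rw [Finset.sum_range_succ, Finset.sum_range_one]
      simp only [Nat.sub_zero, Nat.sub_self]
      simp only [Dw]
      simp only [mul_one, mul_zero, add_zero, smul_zero, add_zero, pow_zero, pow_one, one_mul]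
      module
  | succ n ih =>
      rw [pow_succ', mul_assoc, ih, Finset.mul_sum]
      -- expand each term on LHS
      have lhs_eq : ∀ i ∈ Finset.range (n+2),
          C2 p * (((tp^2 - tp)^i * (1 - 2*tp)^(n+1-i)) • Dw p (n+1) (n+1-i))
          = ((tp^2 - tp)^i * (1 - 2*tp)^(n+2-i)) • (z (2*p) * Dw p (n+1) (n+1-i))
            + ((tp^2 - tp)^(i+1) * (1 - 2*tp)^(n+1-i)) • (Xg ^ (2*p) * Dw p (n+1) (n+1-i)) := by
        intro i hi
        rw [Finset.mem_range] at hi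
        have h2 : n+2-i = (n+1-i)+1 := by omega
        rw [C2, h2, pow_succ, pow_succ]
        simp only [add_mul, smul_mul_assoc, mul_smul_comm]
        module
      rw [Finset.sum_congr rfl lhs_eq, Finset.sum_add_distrib]
      -- now handle RHS
      have rhs_eq : ∀ i ∈ Finset.range (n+3),
          ((tp^2 - tp)^i * (1 - 2*tp)^(n+2-i)) • Dw p (n+2) (n+2-i)
          = (if i ≤ n+1 then
              ((tp^2 - tp)^i * (1 - 2*tp)^(n+2-i)) • (z (2*p) * Dw p (n+1) (n+1-i))
              + ((tp^2 - tp)^i * (1 - 2*tp)^(n+2-i)) • (Xg ^ (2*p) * Dw p (n+1) (n+2-i))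
            else 0) := by
        intro i hi
        rw [Finset.mem_range] at hi
        by_cases hle : i ≤ n+1
        · rw [if_pos hle]
          have h2 : n+2-i = (n+1-i)+1 := by omega
          rw [h2, Dw, smul_add]
        · rw [if_neg hle]
          have h2 : n+2-i = 0 := by omega
          rw [h2, Dw_succ_zero, smul_zero]
      rw [Finset.sum_congr rfl rhs_eq, Finset.sum_ite, Finset.sum_const_zero, add_zero]
      have hfilter : (Finset.range (n+3)).filter (fun i => i ≤ n+1) = Finset.range (n+2) := by
        ext x
        simp only [Finset.mem_filter, Finset.mem_range]
        omega
      rw [hfilter, Finset.sum_add_distrib]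
      congr 1
      rw [Finset.sum_range_succ (fun i => ((tp^2 - tp)^(i+1) * (1 - 2*tp)^(n+1-i)) •
        (Xg ^ (2*p) * Dw p (n+1) (n+1-i))) (n+1)]
      rw [Finset.sum_range_succ' (fun i => ((tp^2 - tp)^i * (1 - 2*tp)^(n+2-i)) •
        (Xg ^ (2*p) * Dw p (n+1) (n+2-i))) (n+1)]
      have hz1 : ((tp^2 - tp)^(n+1+1) * (1 - 2*tp)^(n+1-(n+1))) •
          (Xg ^ (2*p) * Dw p (n+1) (n+1-(n+1))) = 0 := by
        rw [Nat.sub_self, Dw_succ_zero, mul_zero, smul_zero]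
      have hz2 : ((tp^2 - tp)^0 * (1 - 2*tp)^(n+2-0)) •
          (Xg ^ (2*p) * Dw p (n+1) (n+2-0)) = 0 := by
        rw [Dw_gt p (n+1) (n+2-0) (by omega), mul_zero, smul_zero]
      rw [hz1, hz2, add_zero, add_zero]
      refine Finset.sum_congr rfl fun j hj => ?_
      rw [Finset.mem_range] at hj
      have h3 : n+2-(j+1) = n+1-j := by omega
      rw [h3]

lemma sum_adt_succ {M : Type*} [AddCommMonoid M] (d n : ℕ) (f : (Fin (d+1) → ℕ) → M) :
    ∑ c ∈ Finset.Nat.antidiagonalTuple (d+1) n, f c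
      = ∑ ab ∈ Finset.HasAntidiagonal.antidiagonal n, ∑ c ∈ Finset.Nat.antidiagonalTuple d ab.2,
          f (Fin.cons ab.1 c) := by
  rw [← Finset.sum_sigma (Finset.HasAntidiagonal.antidiagonal n)
    (fun ab => Finset.Nat.antidiagonalTuple d ab.2)
    (fun x => f (Fin.cons x.1.1 x.2))]
  refine Finset.sum_nbij' (fun c => ⟨(c 0, ∑ i, Fin.tail c i), Fin.tail c⟩)
    (fun x => Fin.cons x.1.1 x.2) ?_ ?_ ?_ ?_ ?_
  · intro c hc
    rw [Finset.Nat.mem_antidiagonalTuple] at hc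
    rw [Finset.mem_sigma, Finset.HasAntidiagonal.mem_antidiagonal]
    exact ⟨by rw [← hc, Fin.sum_univ_succ]; rfl, by rw [Finset.Nat.mem_antidiagonalTuple]⟩
  · intro x hx
    rw [Finset.mem_sigma, Finset.HasAntidiagonal.mem_antidiagonal] at hx
    rw [Finset.Nat.mem_antidiagonalTuple]
    rw [Fin.sum_univ_succ]
    simp only [Fin.cons_zero, Fin.cons_succ]
    rw [Finset.Nat.mem_antidiagonalTuple.mp hx.2, hx.1]
  · intro c _
    dsimp only
    exact Fin.cons_self_tail c
  · intro x hx
    rw [Finset.mem_sigma, Finset.HasAntidiagonal.mem_antidiagonal] at hx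
    obtain ⟨⟨a, b⟩, c⟩ := x
    have hc : ∑ i, c i = b := Finset.Nat.mem_antidiagonalTuple.mp hx.2
    dsimp only
    simp only [Fin.cons_zero, Fin.tail_cons, hc]
  · intro c _
    dsimp only
    rw [Fin.cons_self_tail]

lemma Dw_sum (p : ℕ) (hp : 1 ≤ p) : ∀ h d : ℕ,
    Dw p h (d+1) = ∑ j ∈ Finset.range h, z (2*p*(j+1)) * Dw p (h-1-j) d := by
  intro h
  induction h with
  | zero => intro d; rw [Dw, Finset.range_zero, Finset.sum_empty]
  | succ n ih =>
      intro d
      rw [Dw, ih d, Finset.mul_sum]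
      rw [Finset.sum_range_succ' (fun j => z (2*p*(j+1)) * Dw p (n+1-1-j) d) n]
      have e1 : 2*p*(0+1) = 2*p := by ring
      have e2 : n+1-1-0 = n := by omega
      rw [e1, e2]
      have hsum : ∑ j ∈ Finset.range n, Xg ^ (2*p) * (z (2*p*(j+1)) * Dw p (n-1-j) d)
          = ∑ j ∈ Finset.range n, z (2*p*(j+1+1)) * Dw p (n+1-1-(j+1)) d := by
        refine Finset.sum_congr rfl fun j hj => ?_
        rw [← mul_assoc, Xg_pow_mul_z _ _
          (Nat.mul_pos (Nat.mul_pos (by omega) hp) (by omega))]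
        have e3 : 2*p + 2*p*(j+1) = 2*p*(j+1+1) := by ring
        have e4 : n-1-j = n+1-1-(j+1) := by omega
        rw [e3, e4]
      rw [hsum]
      exact add_comm _ _

/-- `F^k_d`: the sum of words `z_{a₁}⋯z_{a_d}` over all sequences of positive even
multiples of `p` with `a₁+⋯+a_d = k·p`. -/
def Fkd (p k d : ℕ) : A :=
  ∑ c ∈ (Finset.Nat.antidiagonalTuple d (k * p)).filter
      (fun c => ∀ r, 2 * p ∣ c r ∧ c r ≠ 0),
    zw (List.ofFn c)

lemma Fkd_sum_if (p k d : ℕ) : Fkd p k d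
    = ∑ c ∈ Finset.Nat.antidiagonalTuple d (k * p),
        if (∀ r, 2 * p ∣ c r ∧ c r ≠ 0) then zw (List.ofFn c) else 0 :=
  Finset.sum_filter _ _

lemma Fkd_eq_Dw (p : ℕ) (hp : 1 ≤ p) : ∀ d h, Fkd p (2*h) d = Dw p h d := by
  intro d
  induction d with
  | zero =>
      intro h
      match h with
      | 0 =>
          rw [Fkd_sum_if]
          norm_num
          simp [zw, Dw]
      | h+1 =>
          obtain ⟨m, hm⟩ : ∃ m, 2*(h+1)*p = m + 1 := ⟨2*(h+1)*p - 1,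
            by have := Nat.mul_pos (Nat.mul_pos (by omega : 0 < 2*(h+1)) hp) (by omega : 0 < 1); omega⟩
          rw [Fkd_sum_if, hm, Finset.Nat.antidiagonalTuple_zero_succ, Finset.sum_empty, Dw]
  | succ d ih =>
      intro h
      rw [Fkd_sum_if, sum_adt_succ d (2*h*p)
        (fun c => if (∀ r, 2 * p ∣ c r ∧ c r ≠ 0) then zw (List.ofFn c) else 0)]
      have inner : ∀ ab ∈ Finset.HasAntidiagonal.antidiagonal (2*h*p),
          (∑ c ∈ Finset.Nat.antidiagonalTuple d ab.2,
            (fun c' => if (∀ r, 2 * p ∣ c' r ∧ c' r ≠ 0) then zw (List.ofFn c') else 0)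
              (Fin.cons ab.1 c))
          = if 2*p ∣ ab.1 ∧ ab.1 ≠ 0 then
              z ab.1 * (∑ c ∈ Finset.Nat.antidiagonalTuple d ab.2,
                if (∀ r, 2 * p ∣ c r ∧ c r ≠ 0) then zw (List.ofFn c) else 0)
            else 0 := by
        intro ab _
        dsimp only
        by_cases hQ : 2*p ∣ ab.1 ∧ ab.1 ≠ 0
        · rw [if_pos hQ, Finset.mul_sum]
          refine Finset.sum_congr rfl fun c _ => ?_
          simp only [Fin.forall_fin_succ, Fin.cons_zero, Fin.cons_succ]
          by_cases hP : ∀ r : Fin d, 2*p ∣ c r ∧ c r ≠ 0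
          · rw [if_pos ⟨hQ, hP⟩, if_pos hP]
            simp only [List.ofFn_succ, Fin.cons_zero, Fin.cons_succ, zw_cons]
          · rw [if_neg (fun hh => hP hh.2), if_neg hP, mul_zero]
        · rw [if_neg hQ]
          refine Finset.sum_eq_zero fun c _ => ?_
          rw [if_neg]
          simp only [Fin.forall_fin_succ, Fin.cons_zero, Fin.cons_succ]
          exact fun hh => hQ hh.1
      rw [Finset.sum_congr rfl inner, Finset.Nat.sum_antidiagonal_eq_sum_range_succ_mk]
      simp only
      rw [Finset.sum_ite, Finset.sum_const_zero, add_zero]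
      have himg : (Finset.range (2*h*p+1)).filter (fun a => 2*p ∣ a ∧ a ≠ 0)
          = (Finset.range h).image (fun j => 2*p*(j+1)) := by
        ext a
        simp only [Finset.mem_filter, Finset.mem_range, Finset.mem_image]
        constructor
        · rintro ⟨ha, ⟨m, rfl⟩, hne⟩
          have hm1 : 1 ≤ m := by
            rcases Nat.eq_zero_or_pos m with h0 | h1
            · exact absurd (by rw [h0, mul_zero]) hne
            · exact h1
          have hmh : m ≤ h := by nlinarith
          exact ⟨m-1, by omega, by congr 1; omega⟩
        · rintro ⟨j, hj, rfl⟩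
          refine ⟨by nlinarith, ⟨j+1, rfl⟩, ?_⟩
          have := Nat.mul_pos (Nat.mul_pos (by omega : 0 < 2) hp) (by omega : 0 < j+1)
          omega
      rw [himg, Finset.sum_image (fun a _ b _ hab => by
        have h2p : 0 < 2*p := by omega
        have := Nat.eq_of_mul_eq_mul_left h2p hab
        omega)]
      rw [Dw_sum p hp h d]
      refine Finset.sum_congr rfl fun j hj => ?_
      rw [Finset.mem_range] at hj
      have e : 2*h*p - 2*p*(j+1) = 2*(h-1-j)*p := by
        have hh : 2*h*p = 2*(h-1-j)*p + 2*p*(j+1) := by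
          have h1 : h = (h-1-j) + (j+1) := by omega
          calc 2*h*p = 2*((h-1-j)+(j+1))*p := by rw [← h1]
            _ = 2*(h-1-j)*p + 2*p*(j+1) := by ring
        rw [hh, Nat.add_sub_cancel]
      rw [e]
      congr 1
      rw [← Fkd_sum_if, ih (h-1-j)]

/-- for positive p, k, the alternating sum
`Σ_{m+n=k} (-1)^m (z_p^m ⋆_t z_p^n)` is 0 for odd k and equals
`(-1)^{k/2} Σ_{l₁+l₂=k/2} (t²-t)^{l₁} (1-2t)^{l₂} F^k_{l₂}` for even k. -/
theorem alternating_sum (p k : ℕ) (hp : 1 ≤ p) (hk : 1 ≤ k) :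
    ∑ mn ∈ Finset.HasAntidiagonal.antidiagonal k,
        ((-1 : R) ^ mn.1) • tst (List.replicate mn.1 p) (List.replicate mn.2 p) =
      if Odd k then 0
      else ((-1 : R) ^ (k / 2)) •
        ∑ l ∈ Finset.HasAntidiagonal.antidiagonal (k / 2),
          ((tp ^ 2 - tp) ^ l.1 * (1 - 2 * tp) ^ l.2) • Fkd p k l.2 := by
  have hL : ∑ mn ∈ Finset.HasAntidiagonal.antidiagonal k,
      ((-1 : R) ^ mn.1) • tst (List.replicate mn.1 p) (List.replicate mn.2 p) = Sa p k := by
    rw [Finset.Nat.sum_antidiagonal_eq_sum_range_succ_mk]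
    rfl
  rw [hL]
  rcases Nat.even_or_odd k with he | ho
  · rw [if_neg (by rwa [Nat.not_odd_iff_even])]
    obtain ⟨n, hn⟩ : ∃ n, k = 2*(n+1) := by
      obtain ⟨m, hm⟩ := he
      exact ⟨m-1, by omega⟩
    have hk2 : k/2 = n+1 := by omega
    rw [hk2, hn, Sa_even]
    congr 1
    rw [GC p n, Finset.Nat.sum_antidiagonal_eq_sum_range_succ_mk]
    refine Finset.sum_congr rfl fun i hi => ?_
    simp only
    rw [Fkd_eq_Dw p hp (n+1-i) (n+1)]
  · rw [if_pos ho]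
    obtain ⟨n, hn⟩ := ho
    rw [hn, Sa_odd]
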